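/- (Well-definedness of germ inversion.) Let S be an inverse semigroup, let s, t ∈ S, and let e ∈ S be an idempotent with s·e = t·e. Then: (i) e·star(s) = e·star(t); (ii) the element f := s·e·star(s) is idempotent and satisfies star(s)·f = star(t)·f; and (iii) for any character χ : S → Bool with χ(e) = true and χ(star(s)·s) = true, one has χ(star(s)·f·s) = true, i.e. (θ_s χ)(f) = true. -/

import Mathlib

/-!
An idempotent of an inverse semigroup is its own inverse, since `x * star x` and `star x * x`
are idempotents commuting with `x`. Hence `s * e = t * e` dualizes to `e * star s = e * star t`,
and both `s * e * star s` and `t * e * star t` are the same element `f`. Commuting `e` past the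
idempotent `star s * s` gives `star s * f = e * star s`, which makes `f` idempotent, shows
`star s * f = star t * f`, and turns `star s * f * s` into `e * (star s * s)`, on which a
character takes the value `χ e && χ (star s * s)`.
-/

section InverseSemigroup

variable {S : Type*} [Semigroup S] {star : S → S}

theorem star_mul_self_mul_star (hinv : ∀ s : S, star (star s) = s)
    (hreg : ∀ s : S, s * star s * s = s) (s : S) : star s * s * star s = star s := by
  simpa only [hinv] using hreg (star s)

theorem isIdempotentElem_mul_star_self (hreg : ∀ s : S, s * star s * s = s) (s : S) :
    IsIdempotentElem (s * star s) := by
  rw [IsIdempotentElem, ← mul_assoc, hreg]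

theorem isIdempotentElem_star_mul_self (hinv : ∀ s : S, star (star s) = s)
    (hreg : ∀ s : S, s * star s * s = s) (s : S) : IsIdempotentElem (star s * s) := by
  rw [IsIdempotentElem, ← mul_assoc, star_mul_self_mul_star hinv hreg]

theorem star_eq_self_of_isIdempotentElem (hinv : ∀ s : S, star (star s) = s)
    (hreg : ∀ s : S, s * star s * s = s)
    (hcomm : ∀ e f : S, e * e = e → f * f = f → e * f = f * e)
    {x : S} (hx : IsIdempotentElem x) : star x = x := by
  have hleft : x * star x = x :=
    calc x * star x = x * (x * star x) := by rw [← mul_assoc, hx.eq]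
      _ = x * star x * x := hcomm _ _ hx (isIdempotentElem_mul_star_self hreg x)
      _ = x := hreg x
  have hright : star x * x = x :=
    calc star x * x = star x * x * x := by rw [mul_assoc, hx.eq]
      _ = x * (star x * x) := (hcomm _ _ hx (isIdempotentElem_star_mul_self hinv hreg x)).symm
      _ = x := by rw [← mul_assoc, hreg]
  calc star x = star x * x * star x := (star_mul_self_mul_star hinv hreg x).symm
    _ = x := by rw [hright, hleft]

theorem mul_star_eq_of_mul_eq (hinv : ∀ s : S, star (star s) = s)
    (hanti : ∀ s t : S, star (s * t) = star t * star s)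
    (hreg : ∀ s : S, s * star s * s = s)
    (hcomm : ∀ e f : S, e * e = e → f * f = f → e * f = f * e)
    {s t e : S} (he : IsIdempotentElem e) (hst : s * e = t * e) :
    e * star s = e * star t := by
  simpa only [hanti, star_eq_self_of_isIdempotentElem hinv hreg hcomm he] using congrArg star hst

theorem star_mul_conj_eq (hinv : ∀ s : S, star (star s) = s)
    (hreg : ∀ s : S, s * star s * s = s)
    (hcomm : ∀ e f : S, e * e = e → f * f = f → e * f = f * e)
    (s : S) {e : S} (he : IsIdempotentElem e) :
    star s * (s * e * star s) = e * star s :=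
  calc star s * (s * e * star s) = star s * s * e * star s := by simp only [mul_assoc]
    _ = e * (star s * s) * star s := by
      rw [hcomm _ _ he (isIdempotentElem_star_mul_self hinv hreg s)]
    _ = e * star s := by rw [mul_assoc, star_mul_self_mul_star hinv hreg]

theorem isIdempotentElem_conj (hinv : ∀ s : S, star (star s) = s)
    (hreg : ∀ s : S, s * star s * s = s)
    (hcomm : ∀ e f : S, e * e = e → f * f = f → e * f = f * e)
    (s : S) {e : S} (he : IsIdempotentElem e) : IsIdempotentElem (s * e * star s) :=
  calc s * e * star s * (s * e * star s) = s * e * (star s * (s * e * star s)) := by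
        simp only [mul_assoc]
    _ = s * e * star s := by
      rw [star_mul_conj_eq hinv hreg hcomm s he, ← mul_assoc, mul_assoc s, he.eq]

end InverseSemigroup

/-- Well-definedness of germ inversion: let `S` be an inverse
semigroup, `s t ∈ S`, and `e` an idempotent with `s * e = t * e`.  Then
(i) `e * star s = e * star t`; (ii) `f := s * e * star s` is idempotent and
`star s * f = star t * f`; and (iii) for any character `χ` with `χ e = true`
and `χ (star s * s) = true` one has `χ (star s * f * s) = true`,
i.e. `(θ_s χ) f = true`. -/
theorem germ_inversion_well_defined {S : Type*} [Semigroup S] (star : S → S)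
    (hinv : ∀ s : S, star (star s) = s)
    (hanti : ∀ s t : S, star (s * t) = star t * star s)
    (hreg : ∀ s : S, s * star s * s = s)
    (hcomm : ∀ e f : S, e * e = e → f * f = f → e * f = f * e)
    (s t e : S) (he : e * e = e) (hst : s * e = t * e) :
    (e * star s = e * star t) ∧
    ((s * e * star s) * (s * e * star s) = s * e * star s ∧
      star s * (s * e * star s) = star t * (s * e * star s)) ∧
    (∀ χ : S → Bool,
      (∀ e' f' : S, e' * e' = e' → f' * f' = f' → χ (e' * f') = (χ e' && χ f')) →
      χ e = true → χ (star s * s) = true →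
      χ (star s * (s * e * star s) * s) = true) := by
  have hdual : e * star s = e * star t := mul_star_eq_of_mul_eq hinv hanti hreg hcomm he hst
  have hconj : s * e * star s = t * e * star t := by
    rw [hst, mul_assoc, hdual, ← mul_assoc]
  refine ⟨hdual, ⟨isIdempotentElem_conj hinv hreg hcomm s he, ?_⟩, ?_⟩
  · rw [star_mul_conj_eq hinv hreg hcomm s he, hconj, star_mul_conj_eq hinv hreg hcomm t he,
      hdual]
  · intro χ hχ hχe hχs
    rw [star_mul_conj_eq hinv hreg hcomm s he, mul_assoc,
      hχ _ _ he (isIdempotentElem_star_mul_self hinv hreg s), hχe, hχs, Bool.and_self]
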